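/- For κ > 0 and n ≥ 2, the function a(s) = s^{(n−1)/n} / |∂B_s|, where B_s is a geodesic ball of volume s in the n-dimensional sphere of curvature κ, is monotone increasing in s on (0, |M_κ|). For κ = 0 (Euclidean space), a(s) is the constant n^{−1} ω_n^{−1/n}. -/

import Mathlib

open Set Real MeasureTheory

/-- `sn_κ(r) = sin(√κ r)/√κ` for `κ > 0`, and `sn_0(r) = r`. -/
noncomputable def snk (κ r : ℝ) : ℝ :=
  if κ = 0 then r else Real.sin (Real.sqrt κ * r) / Real.sqrt κ

/-- The volume `ω_n` of the unit ball in `ℝⁿ`. -/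
noncomputable def unitBallVol (n : ℕ) : ℝ :=
  (volume (Metric.ball (0 : EuclideanSpace ℝ (Fin n)) 1)).toReal

/-- The volume of the geodesic ball of radius `r` in the space form `M_κ`. -/
noncomputable def sfBallVol (n : ℕ) (κ r : ℝ) : ℝ :=
  n * unitBallVol n * ∫ t in (0:ℝ)..r, snk κ t ^ (n - 1)

/-- The boundary area of the geodesic ball of radius `r` in the space form `M_κ`. -/
noncomputable def sfBallArea (n : ℕ) (κ r : ℝ) : ℝ :=
  n * unitBallVol n * snk κ r ^ (n - 1)

/-!
Write `S = snk κ` and `I(r) = ∫₀ʳ S^{n-1}`, so that `|B_r| = n ω_n I` and `|∂B_r| = n ω_n S^{n-1}`.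
The quotient is then `(n ω_n)^{-1/n} (I / Sⁿ)^{(n-1)/n}`, and it suffices that `I / Sⁿ` increases.
Its derivative has the sign of `Sⁿ - n S' I`; this vanishes at `0` and has derivative
`-n S'' I = n κ S I > 0`, because `S'' = -κ S`. For `κ = 0` one has `I / Sⁿ = 1 / n`.
-/

theorem unitBallVol_pos (n : ℕ) : 0 < unitBallVol n :=
  ENNReal.toReal_pos (Metric.measure_ball_pos volume 0 one_pos).ne' measure_ball_lt_top.ne

theorem snk_zero_left (r : ℝ) : snk 0 r = r := if_pos rfl

theorem snk_of_ne_zero {κ : ℝ} (hκ : κ ≠ 0) (r : ℝ) : snk κ r = sin (√κ * r) / √κ := if_neg hκ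

theorem continuous_snk (κ : ℝ) : Continuous (snk κ) := by
  by_cases hκ : κ = 0
  · subst hκ
    rw [funext snk_zero_left]
    exact continuous_id'
  · rw [funext (snk_of_ne_zero hκ)]
    fun_prop

theorem snk_pos {κ r : ℝ} (hκ : 0 < κ) (hr : r ∈ Ioo 0 (π / √κ)) : 0 < snk κ r := by
  have hk : 0 < √κ := sqrt_pos.2 hκ
  rw [snk_of_ne_zero hκ.ne']
  refine div_pos (sin_pos_of_pos_of_lt_pi (mul_pos hk hr.1) ?_) hk
  rw [← lt_div_iff₀' hk]
  exact hr.2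

theorem hasDerivAt_snk {κ : ℝ} (hκ : 0 < κ) (r : ℝ) :
    HasDerivAt (snk κ) (cos (√κ * r)) r := by
  have hk : √κ ≠ 0 := (sqrt_pos.2 hκ).ne'
  rw [funext (snk_of_ne_zero hκ.ne')]
  exact ((hasDerivAt_const_mul (x := r) √κ).sin.div_const √κ).congr_deriv (by field_simp)

theorem hasDerivAt_cos_sqrt_mul {κ : ℝ} (hκ : 0 < κ) (r : ℝ) :
    HasDerivAt (fun u => cos (√κ * u)) (-(κ * snk κ r)) r := by
  have hk : √κ ≠ 0 := (sqrt_pos.2 hκ).ne'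
  refine (hasDerivAt_const_mul (x := r) √κ).cos.congr_deriv ?_
  rw [snk_of_ne_zero hκ.ne']
  field_simp
  rw [sq_sqrt hκ.le, mul_comm]

theorem hasDerivAt_integral_snk_pow (κ : ℝ) (m : ℕ) (r : ℝ) :
    HasDerivAt (fun u => ∫ t in (0:ℝ)..u, snk κ t ^ m) (snk κ r ^ m) r :=
  (((continuous_snk κ).pow m).integral_hasStrictDerivAt 0 r).hasDerivAt

theorem integral_snk_pow_pos {κ r : ℝ} (hκ : 0 < κ) (m : ℕ) (hr : r ∈ Ioo 0 (π / √κ)) :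
    0 < ∫ t in (0:ℝ)..r, snk κ t ^ m :=
  intervalIntegral.intervalIntegral_pos_of_pos_on
    (((continuous_snk κ).pow m).intervalIntegrable 0 r)
    (fun _ ht => pow_pos (snk_pos hκ ⟨ht.1, ht.2.trans hr.2⟩) m) hr.1

theorem integral_snk_zero_left_pow {n : ℕ} (hn : n ≠ 0) (r : ℝ) :
    ∫ t in (0:ℝ)..r, snk 0 t ^ (n - 1) = r ^ n / n := by
  simp only [snk_zero_left, integral_pow, Nat.sub_add_cancel (Nat.one_le_iff_ne_zero.2 hn)]
  rw [Nat.cast_sub (Nat.one_le_iff_ne_zero.2 hn)]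
  simp [hn]

theorem mul_cos_mul_integral_snk_pow_lt {κ r : ℝ} (hκ : 0 < κ) {n : ℕ} (hn : n ≠ 0)
    (hr : r ∈ Ioo 0 (π / √κ)) :
    n * cos (√κ * r) * ∫ t in (0:ℝ)..r, snk κ t ^ (n - 1) < snk κ r ^ n := by
  set g : ℝ → ℝ := fun u => snk κ u ^ n - n * cos (√κ * u) * ∫ t in (0:ℝ)..u, snk κ t ^ (n - 1)
  have hg : ∀ u, HasDerivAt g (n * κ * snk κ u * ∫ t in (0:ℝ)..u, snk κ t ^ (n - 1)) u := fun u =>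
    (((hasDerivAt_snk hκ u).fun_pow n).sub
      (((hasDerivAt_cos_sqrt_mul hκ u).const_mul (n : ℝ)).mul
        (hasDerivAt_integral_snk_pow κ (n - 1) u))).congr_deriv (by ring)
  have hg_mono : StrictMonoOn g (Icc 0 r) := by
    refine strictMonoOn_of_deriv_pos (convex_Icc 0 r)
      (fun u _ => (hg u).continuousAt.continuousWithinAt) fun u hu => ?_
    rw [interior_Icc] at hu
    have hu' : u ∈ Ioo 0 (π / √κ) := ⟨hu.1, hu.2.trans hr.2⟩
    rw [(hg u).deriv]
    have := snk_pos hκ hu'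
    have := integral_snk_pow_pos hκ (n - 1) hu'
    positivity
  have hg0 : g 0 = 0 := by simp [g, snk, hn]
  have := hg_mono (left_mem_Icc.2 hr.1.le) (right_mem_Icc.2 hr.1.le) hr.1
  simp only [hg0, g] at this
  linarith

theorem strictMonoOn_integral_snk_pow_div_snk_pow {κ : ℝ} (hκ : 0 < κ) {n : ℕ} (hn : n ≠ 0) :
    StrictMonoOn (fun r => (∫ t in (0:ℝ)..r, snk κ t ^ (n - 1)) / snk κ r ^ n)
      (Ioo 0 (π / √κ)) := by
  have hq : ∀ r ∈ Ioo 0 (π / √κ), HasDerivAt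
      (fun r => (∫ t in (0:ℝ)..r, snk κ t ^ (n - 1)) / snk κ r ^ n)
      (snk κ r ^ (n - 1) * (snk κ r ^ n - n * cos (√κ * r) * ∫ t in (0:ℝ)..r, snk κ t ^ (n - 1))
        / (snk κ r ^ n) ^ 2) r := fun r hr =>
    ((hasDerivAt_integral_snk_pow κ (n - 1) r).div ((hasDerivAt_snk hκ r).fun_pow n)
      (pow_ne_zero n (snk_pos hκ hr).ne')).congr_deriv (by ring)
  refine strictMonoOn_of_deriv_pos (convex_Ioo _ _)
    (fun r hr => (hq r hr).continuousAt.continuousWithinAt) fun r hr => ?_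
  rw [interior_Ioo] at hr
  rw [(hq r hr).deriv]
  have := snk_pos hκ hr
  have := sub_pos.2 (mul_cos_mul_integral_snk_pow_lt hκ hn hr)
  positivity

theorem mul_rpow_div_mul_pow_eq {n : ℕ} (hn : n ≠ 0) {c x y : ℝ} (hc : 0 < c) (hx : 0 ≤ x)
    (hy : 0 < y) :
    (c * x) ^ (((n:ℝ) - 1) / n) / (c * y ^ (n - 1))
      = c ^ (-(1 / (n:ℝ))) * (x / y ^ n) ^ (((n:ℝ) - 1) / n) := by
  have hn' : (n:ℝ) ≠ 0 := Nat.cast_ne_zero.2 hn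
  have hy_pow : (y ^ n) ^ (((n:ℝ) - 1) / n) = y ^ (n - 1) := by
    rw [← rpow_natCast, ← rpow_mul hy.le, ← rpow_natCast,
      Nat.cast_sub (Nat.one_le_iff_ne_zero.2 hn)]
    field_simp
    simp
  have hc_pow : c ^ (((n:ℝ) - 1) / n) = c * c ^ (-(1 / (n:ℝ))) := by
    calc c ^ (((n:ℝ) - 1) / n) = c ^ (1 + -(1 / (n:ℝ))) := by congr 1; field_simp; ring
      _ = c * c ^ (-(1 / (n:ℝ))) := by rw [rpow_add hc, rpow_one]
  rw [mul_rpow hc.le hx, div_rpow hx (by positivity), hy_pow, hc_pow]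
  field_simp

theorem mul_rpow_neg_inv_mul_inv_rpow {n : ℕ} (hn : n ≠ 0) {ω : ℝ} (hω : 0 < ω) :
    ((n:ℝ) * ω) ^ (-(1 / (n:ℝ))) * ((n:ℝ)⁻¹) ^ (((n:ℝ) - 1) / n)
      = (n:ℝ)⁻¹ * ω ^ (-(1 / (n:ℝ))) := by
  have hn' : (0:ℝ) < n := by positivity
  rw [mul_rpow hn'.le hω.le, inv_rpow hn'.le, mul_right_comm, ← rpow_neg hn'.le,
    ← rpow_add hn', ← rpow_neg_one]
  congr 2
  field_simp
  ring

theorem isoperimetric_quotient_monotone_general (n : ℕ) (hn : 2 ≤ n) (κ : ℝ) :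
    (0 < κ → StrictMonoOn
        (fun r => sfBallVol n κ r ^ (((n:ℝ) - 1) / n) / sfBallArea n κ r)
        (Set.Ioo 0 (Real.pi / Real.sqrt κ)))
      ∧ (κ = 0 → ∀ r : ℝ, 0 < r →
          sfBallVol n κ r ^ (((n:ℝ) - 1) / n) / sfBallArea n κ r
            = (n : ℝ)⁻¹ * unitBallVol n ^ (-(1 / (n:ℝ)))) := by
  have hn0 : n ≠ 0 := by omega
  have hc : 0 < (n:ℝ) * unitBallVol n := mul_pos (by positivity) (unitBallVol_pos n)
  have hquot : ∀ r, 0 ≤ ∫ t in (0:ℝ)..r, snk κ t ^ (n - 1) → 0 < snk κ r →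
      sfBallVol n κ r ^ (((n:ℝ) - 1) / n) / sfBallArea n κ r
        = (n * unitBallVol n) ^ (-(1 / (n:ℝ)))
          * ((∫ t in (0:ℝ)..r, snk κ t ^ (n - 1)) / snk κ r ^ n) ^ (((n:ℝ) - 1) / n) :=
    fun r hI hS => mul_rpow_div_mul_pow_eq hn0 hc hI hS
  refine ⟨fun hκ => ?_, fun hκ r hr => ?_⟩
  · refine StrictMonoOn.congr (fun a ha b hb hab => ?_) fun r hr =>
      (hquot r (integral_snk_pow_pos hκ _ hr).le (snk_pos hκ hr)).symm
    have hα : (0:ℝ) < ((n:ℝ) - 1) / n :=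
      div_pos (sub_pos.2 (by exact_mod_cast hn)) (by positivity)
    have hq_pos := div_pos (integral_snk_pow_pos hκ (n - 1) ha) (pow_pos (snk_pos hκ ha) n)
    have hq_lt := strictMonoOn_integral_snk_pow_div_snk_pow hκ hn0 ha hb hab
    gcongr
  · subst hκ
    rw [hquot r (by rw [integral_snk_zero_left_pow hn0]; positivity) (by rwa [snk_zero_left]),
      integral_snk_zero_left_pow hn0, snk_zero_left, div_div_cancel_left' (by positivity),
      mul_rpow_neg_inv_mul_inv_rpow hn0 (unitBallVol_pos n)]

/-- The isoperimetric profile quotient `a(s) = s^{(n-1)/n}/|∂B_s|`, expressed in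
terms of the radius of the geodesic ball `B_s` of volume `s` in `M_κ`:
for `κ > 0` it is strictly increasing in the volume `s` (equivalently in the
radius, since the volume is increasing in the radius), while for `κ = 0` it is
the constant `n⁻¹ ω_n^{-1/n}`. -/
theorem isoperimetric_quotient_monotone (n : ℕ) (hn : 2 ≤ n) (κ : ℝ)
    (hκ : 0 ≤ κ) :
    (0 < κ → StrictMonoOn
        (fun r => sfBallVol n κ r ^ (((n:ℝ) - 1) / n) / sfBallArea n κ r)
        (Set.Ioo 0 (Real.pi / Real.sqrt κ)))
      ∧ (κ = 0 → ∀ r : ℝ, 0 < r →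
          sfBallVol n κ r ^ (((n:ℝ) - 1) / n) / sfBallArea n κ r
            = (n : ℝ)⁻¹ * unitBallVol n ^ (-(1 / (n:ℝ)))) :=
  isoperimetric_quotient_monotone_general n hn κ
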